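/- arXiv:2303.00788 — 4 statements merged into one kernel-verified Lean document; each statement's English description precedes it below -/
import Mathlib

section
/- For any compact set K ⊆ ℝ^d, any m ≥ 1, any continuous task functions f_1, …, f_m : K → ℝ, and any ε > 0, there exist a ReLU network function N : ℝ^{d+1} → ℝ and real scalars β_1, …, β_m ∈ ℝ (which may be taken to be β_j = j) such that for every j ∈ {1, …, m} and every x ∈ K, |N(x, β_j) − f_j(x)| ≤ ε. (Theorem 1: learned-context neural networks with a single scalar task parameter are universal multi-task approximators.) -/
/-- An affine map between real coordinate spaces: `A z = W z + b`. -/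
def IsAffineMap {p q : ℕ} (A : (Fin p → ℝ) → (Fin q → ℝ)) : Prop :=
  ∃ (W : Matrix (Fin q) (Fin p) ℝ) (b : Fin q → ℝ), ∀ z, A z = W.mulVec z + b

/-- Componentwise ReLU activation. -/
def reluVec {n : ℕ} (v : Fin n → ℝ) : Fin n → ℝ := fun i => max (v i) 0

/-- `IsReLUNet N` holds iff `N = A_{K+1} ∘ σ ∘ A_K ∘ σ ∘ ⋯ ∘ σ ∘ A_1` for some `K ≥ 0`,
affine maps `A_i` and componentwise ReLU `σ`. -/
inductive IsReLUNet : ∀ {p q : ℕ}, ((Fin p → ℝ) → (Fin q → ℝ)) → Prop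
  | affine {p q : ℕ} (A : (Fin p → ℝ) → (Fin q → ℝ)) (hA : IsAffineMap A) : IsReLUNet A
  | comp {p r q : ℕ} (A : (Fin r → ℝ) → (Fin q → ℝ)) (hA : IsAffineMap A)
      (N : (Fin p → ℝ) → (Fin r → ℝ)) (hN : IsReLUNet N) :
      IsReLUNet (fun z => A (reluVec (N z)))

lemma IsAffineMap.comp' {p q r : ℕ} {A : (Fin q → ℝ) → (Fin r → ℝ)} {B : (Fin p → ℝ) → (Fin q → ℝ)}
    (hA : IsAffineMap A) (hB : IsAffineMap B) : IsAffineMap (fun z => A (B z)) := by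
  obtain ⟨W, b, hW⟩ := hA
  obtain ⟨V, c, hV⟩ := hB
  refine ⟨W * V, W.mulVec c + b, fun z => ?_⟩
  show A (B z) = _
  rw [hW, hV, Matrix.mulVec_add, ← Matrix.mulVec_mulVec, add_assoc]

lemma IsAffineMap.pair {p q1 q2 : ℕ} {A1 : (Fin p → ℝ) → (Fin q1 → ℝ)}
    {A2 : (Fin p → ℝ) → (Fin q2 → ℝ)} (h1 : IsAffineMap A1) (h2 : IsAffineMap A2) :
    IsAffineMap (fun z => Fin.append (A1 z) (A2 z)) := by
  obtain ⟨W1, b1, hW1⟩ := h1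
  obtain ⟨W2, b2, hW2⟩ := h2
  refine ⟨Fin.append W1 W2, Fin.append b1 b2, fun z => ?_⟩
  funext i
  refine Fin.addCases (fun i1 => ?_) (fun i2 => ?_) i <;>
    simp [hW1, hW2, Matrix.mulVec, Fin.append_left, Fin.append_right]
  · erw [Fin.append_left]
  · erw [Fin.append_right]

lemma isAffineMap_projLeft {p1 p2 : ℕ} :
    IsAffineMap (fun (z : Fin (p1 + p2) → ℝ) => fun i => z (Fin.castAdd p2 i)) := by
  refine ⟨fun i k => if k = Fin.castAdd p2 i then 1 else 0, 0, fun z => ?_⟩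
  funext i
  simp [Matrix.mulVec, dotProduct, ite_mul]

lemma isAffineMap_projRight {p1 p2 : ℕ} :
    IsAffineMap (fun (z : Fin (p1 + p2) → ℝ) => fun i => z (Fin.natAdd p1 i)) := by
  refine ⟨fun i k => if k = Fin.natAdd p1 i then 1 else 0, 0, fun z => ?_⟩
  funext i
  simp [Matrix.mulVec, dotProduct, ite_mul]

lemma isAffineMap_id {p : ℕ} : IsAffineMap (fun (z : Fin p → ℝ) => z) :=
  ⟨1, 0, fun z => by simp [Matrix.one_mulVec]⟩

lemma isAffineMap_neg {p : ℕ} : IsAffineMap (fun (z : Fin p → ℝ) => -z) :=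
  ⟨-1, 0, fun z => by simp [Matrix.neg_mulVec, Matrix.one_mulVec]⟩

lemma IsAffineMap.sub {p q : ℕ} {A B : (Fin p → ℝ) → (Fin q → ℝ)}
    (hA : IsAffineMap A) (hB : IsAffineMap B) : IsAffineMap (fun z => A z - B z) := by
  obtain ⟨W1, b1, hW1⟩ := hA
  obtain ⟨W2, b2, hW2⟩ := hB
  refine ⟨W1 - W2, b1 - b2, fun z => ?_⟩
  show A z - B z = _
  rw [hW1, hW2, Matrix.sub_mulVec]
  abel

lemma IsReLUNet.affineComp {p q r : ℕ} {N : (Fin p → ℝ) → (Fin q → ℝ)}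
    {A : (Fin q → ℝ) → (Fin r → ℝ)} (hN : IsReLUNet N) (hA : IsAffineMap A) :
    IsReLUNet (fun z => A (N z)) := by
  induction hN with
  | affine B hB => exact IsReLUNet.affine _ (hA.comp' hB)
  | comp B hB M hM _ih => exact IsReLUNet.comp _ (hA.comp' hB) _ hM

lemma reluVec_apply {n : ℕ} (v : Fin n → ℝ) (i : Fin n) : reluVec v i = max (v i) 0 := rfl

/-- ReLU nets with exactly `K` hidden (ReLU) layers. -/
def NetD : ℕ → {p q : ℕ} → ((Fin p → ℝ) → (Fin q → ℝ)) → Prop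
  | 0, _, _, N => IsAffineMap N
  | K+1, p, q, N => ∃ (r : ℕ) (A : (Fin r → ℝ) → (Fin q → ℝ)) (M : (Fin p → ℝ) → (Fin r → ℝ)),
      IsAffineMap A ∧ NetD K M ∧ N = fun z => A (reluVec (M z))

lemma isReLUNet_of_netD : ∀ (K : ℕ) {p q : ℕ} (N : (Fin p → ℝ) → (Fin q → ℝ)),
    NetD K N → IsReLUNet N := by
  intro K
  induction K with
  | zero => exact fun N h => IsReLUNet.affine _ h
  | succ K ih =>
    rintro p q N ⟨r, A, M, hA, hM, rfl⟩
    exact IsReLUNet.comp _ hA _ (ih _ hM)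

lemma netD_of_isReLUNet {p q : ℕ} {N : (Fin p → ℝ) → (Fin q → ℝ)} (h : IsReLUNet N) :
    ∃ K, NetD K N := by
  induction h with
  | affine A hA => exact ⟨0, hA⟩
  | comp A hA M hM ih =>
    obtain ⟨K, hK⟩ := ih
    exact ⟨K + 1, _, A, M, hA, hK, rfl⟩

lemma netD_succ : ∀ (K : ℕ) {p q : ℕ} (N : (Fin p → ℝ) → (Fin q → ℝ)),
    NetD K N → NetD (K + 1) N := by
  intro K
  induction K with
  | zero =>
    rintro p q N ⟨W, b, hW⟩
    refine ⟨p + p, fun u => W.mulVec (fun k => u (Fin.castAdd p k) - u (Fin.natAdd p k)) + b,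
      fun z => Fin.append z (-z), ?_, ?_, ?_⟩
    · have haff : IsAffineMap (fun (u : Fin (p + p) → ℝ) =>
          fun k => u (Fin.castAdd p k) - u (Fin.natAdd p k)) :=
        isAffineMap_projLeft.sub isAffineMap_projRight
      exact (IsAffineMap.comp' ⟨W, b, fun z => rfl⟩ haff : _)
    · exact isAffineMap_id.pair isAffineMap_neg
    · funext z
      have e : (fun k => reluVec (Fin.append z (-z)) (Fin.castAdd p k)
          - reluVec (Fin.append z (-z)) (Fin.natAdd p k)) = z := by
        funext k
        rw [reluVec_apply, reluVec_apply, Fin.append_left, Fin.append_right, Pi.neg_apply,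
          max_zero_sub_max_neg_zero_eq_self]
      show N z = W.mulVec (fun k => reluVec (Fin.append z (-z)) (Fin.castAdd p k)
          - reluVec (Fin.append z (-z)) (Fin.natAdd p k)) + b
      rw [hW, e]
  | succ K ih =>
    rintro p q N ⟨r, A, M, hA, hM, rfl⟩
    exact ⟨r, A, M, hA, ih _ hM, rfl⟩

lemma netD_mono {K K' : ℕ} (h : K ≤ K') {p q : ℕ} {N : (Fin p → ℝ) → (Fin q → ℝ)}
    (hN : NetD K N) : NetD K' N := by
  induction h with
  | refl => exact hN
  | step _ ih => exact netD_succ _ _ ih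

lemma netD_pair : ∀ (K : ℕ) {p q1 q2 : ℕ} (N1 : (Fin p → ℝ) → (Fin q1 → ℝ))
    (N2 : (Fin p → ℝ) → (Fin q2 → ℝ)), NetD K N1 → NetD K N2 →
    NetD K (fun z => Fin.append (N1 z) (N2 z)) := by
  intro K
  induction K with
  | zero => exact fun N1 N2 h1 h2 => h1.pair h2
  | succ K ih =>
    rintro p q1 q2 N1 N2 ⟨r1, A1, M1, hA1, hM1, rfl⟩ ⟨r2, A2, M2, hA2, hM2, rfl⟩
    refine ⟨r1 + r2, fun u => Fin.append (A1 fun i => u (Fin.castAdd r2 i))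
      (A2 fun i => u (Fin.natAdd r1 i)), fun z => Fin.append (M1 z) (M2 z),
      ?_, ih _ _ hM1 hM2, ?_⟩
    · exact (hA1.comp' isAffineMap_projLeft).pair (hA2.comp' isAffineMap_projRight)
    · funext z
      have e1 : (fun i => reluVec (Fin.append (M1 z) (M2 z)) (Fin.castAdd r2 i))
          = reluVec (M1 z) := by
        funext i
        rw [reluVec_apply, Fin.append_left]
        rfl
      have e2 : (fun i => reluVec (Fin.append (M1 z) (M2 z)) (Fin.natAdd r1 i))
          = reluVec (M2 z) := by
        funext i
        rw [reluVec_apply, Fin.append_right]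
        rfl
      show Fin.append (A1 (reluVec (M1 z))) (A2 (reluVec (M2 z)))
          = Fin.append (A1 fun i => reluVec (Fin.append (M1 z) (M2 z)) (Fin.castAdd r2 i))
            (A2 fun i => reluVec (Fin.append (M1 z) (M2 z)) (Fin.natAdd r1 i))
      rw [e1, e2]

/-- Scalar functions representable by ReLU nets. -/
def NetFun {n : ℕ} (h : (Fin n → ℝ) → ℝ) : Prop :=
  IsReLUNet (fun z (_ : Fin 1) => h z)

lemma netFun_affine {n : ℕ} (w : Fin n → ℝ) (c : ℝ) :
    NetFun (fun z => dotProduct w z + c) := by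
  refine IsReLUNet.affine _ ⟨fun _ => w, fun _ => c, fun z => ?_⟩
  funext i
  rfl

lemma netFun_const {n : ℕ} (c : ℝ) : NetFun (fun _ : Fin n → ℝ => c) := by
  have := netFun_affine (n := n) 0 c
  simpa [dotProduct] using this

/-- pairing of two scalar nets into a net with two outputs -/
lemma netFun_pairNet {n : ℕ} {h1 h2 : (Fin n → ℝ) → ℝ} (H1 : NetFun h1) (H2 : NetFun h2) :
    IsReLUNet (fun z => Fin.append (fun _ : Fin 1 => h1 z) (fun _ : Fin 1 => h2 z)) := by
  obtain ⟨K1, hK1⟩ := netD_of_isReLUNet H1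
  obtain ⟨K2, hK2⟩ := netD_of_isReLUNet H2
  exact isReLUNet_of_netD _ _
    (netD_pair (max K1 K2) _ _ (netD_mono (le_max_left _ _) hK1)
      (netD_mono (le_max_right _ _) hK2))

lemma netFun_combine {n : ℕ} {h1 h2 : (Fin n → ℝ) → ℝ} (H1 : NetFun h1) (H2 : NetFun h2)
    (v : Fin 4 → ℝ) :
    NetFun (fun z => v 0 * max (h1 z - h2 z) 0 + v 1 * max (h2 z - h1 z) 0
      + v 2 * max (h2 z) 0 + v 3 * max (-h2 z) 0) := by
  -- inner affine map L : ℝ^(1+1) → ℝ^4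
  set w1 : Fin 4 → ℝ := ![1, -1, 0, 0] with hw1
  set w2 : Fin 4 → ℝ := ![-1, 1, 1, -1] with hw2
  set L : (Fin (1 + 1) → ℝ) → (Fin 4 → ℝ) :=
    fun u => fun i => w1 i * u (Fin.castAdd 1 0) + w2 i * u (Fin.natAdd 1 0) with hL
  have hLaff : IsAffineMap L := by
    refine ⟨fun i k => Fin.addCases (fun _ => w1 i) (fun _ => w2 i) k, 0, fun u => ?_⟩
    funext i
    show _ = dotProduct _ u + 0
    rw [dotProduct, Fin.sum_univ_add, Fin.sum_univ_one, Fin.sum_univ_one]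
    beta_reduce
    rw [Fin.addCases_left, Fin.addCases_right, add_zero]
  -- final affine map F : ℝ^4 → ℝ^1
  set F : (Fin 4 → ℝ) → (Fin 1 → ℝ) :=
    fun u => fun _ => v 0 * u 0 + v 1 * u 1 + v 2 * u 2 + v 3 * u 3 with hF
  have hFaff : IsAffineMap F := by
    refine ⟨fun _ => v, 0, fun u => ?_⟩
    funext i
    show _ = dotProduct v u + 0
    rw [dotProduct, Fin.sum_univ_four]
    simp
    rfl
  have hInner : IsReLUNet (fun z =>
      L (Fin.append (fun _ : Fin 1 => h1 z) (fun _ : Fin 1 => h2 z))) :=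
    (netFun_pairNet H1 H2).affineComp hLaff
  have := IsReLUNet.comp F hFaff _ hInner
  have heq : (fun z => F (reluVec (L (Fin.append (fun _ : Fin 1 => h1 z)
      (fun _ : Fin 1 => h2 z))))) = fun z (_ : Fin 1) =>
      v 0 * max (h1 z - h2 z) 0 + v 1 * max (h2 z - h1 z) 0
      + v 2 * max (h2 z) 0 + v 3 * max (-h2 z) 0 := by
    funext z i
    have hu0 : Fin.append (fun _ : Fin 1 => h1 z) (fun _ : Fin 1 => h2 z) (Fin.castAdd 1 0)
        = h1 z := Fin.append_left _ _ _
    have hu1 : Fin.append (fun _ : Fin 1 => h1 z) (fun _ : Fin 1 => h2 z) (Fin.natAdd 1 0)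
        = h2 z := Fin.append_right _ _ _
    show v 0 * max (L _ 0) 0 + v 1 * max (L _ 1) 0 + v 2 * max (L _ 2) 0
        + v 3 * max (L _ 3) 0 = _
    rw [hL]
    simp only [hu0, hu1, hw1, hw2]
    norm_num [Matrix.cons_val_two, Matrix.cons_val_three]
    ring_nf
  rw [heq] at this
  exact this

lemma max_sub_max_zero_add (a b : ℝ) : max (a - b) 0 + b = max a b := by
  rcases le_total a b with h | h
  · rw [max_eq_right (sub_nonpos.mpr h), max_eq_right h, zero_add]
  · rw [max_eq_left (sub_nonneg.mpr h), max_eq_left h, sub_add_cancel]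

lemma netFun_max {n : ℕ} {h1 h2 : (Fin n → ℝ) → ℝ} (H1 : NetFun h1) (H2 : NetFun h2) :
    NetFun (fun z => max (h1 z) (h2 z)) := by
  have := netFun_combine H1 H2 ![1, 0, 1, -1]
  have heq : (fun z => (1:ℝ) * max (h1 z - h2 z) 0 + 0 * max (h2 z - h1 z) 0
      + 1 * max (h2 z) 0 + (-1) * max (-h2 z) 0) = fun z => max (h1 z) (h2 z) := by
    funext z
    have := max_zero_sub_max_neg_zero_eq_self (h2 z)
    have := max_sub_max_zero_add (h1 z) (h2 z)
    nlinarith [le_max_left (h1 z - h2 z) 0]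
  simp only [Matrix.cons_val_zero, Matrix.cons_val_one, Matrix.head_cons] at this
  rw [show ((![1, 0, 1, -1] : Fin 4 → ℝ) 2) = 1 from rfl,
    show ((![1, 0, 1, -1] : Fin 4 → ℝ) 3) = -1 from rfl] at this
  rw [← heq]
  exact this

lemma netFun_min {n : ℕ} {h1 h2 : (Fin n → ℝ) → ℝ} (H1 : NetFun h1) (H2 : NetFun h2) :
    NetFun (fun z => min (h1 z) (h2 z)) := by
  have := netFun_combine H1 H2 ![0, -1, 1, -1]
  have heq : (fun z => (0:ℝ) * max (h1 z - h2 z) 0 + (-1) * max (h2 z - h1 z) 0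
      + 1 * max (h2 z) 0 + (-1) * max (-h2 z) 0) = fun z => min (h1 z) (h2 z) := by
    funext z
    have e1 := max_zero_sub_max_neg_zero_eq_self (h2 z)
    have e2 : max (h2 z - h1 z) 0 + h1 z = max (h2 z) (h1 z) := max_sub_max_zero_add _ _
    have e3 : min (h1 z) (h2 z) = h1 z + h2 z - max (h1 z) (h2 z) := by
      rcases le_total (h1 z) (h2 z) with h | h <;>
        simp [min_eq_left, min_eq_right, max_eq_left, max_eq_right, h] <;> ring
    rw [max_comm (h2 z) (h1 z)] at e2
    linarith
  simp only [Matrix.cons_val_zero, Matrix.cons_val_one, Matrix.head_cons] at this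
  rw [show ((![0, -1, 1, -1] : Fin 4 → ℝ) 2) = 1 from rfl,
    show ((![0, -1, 1, -1] : Fin 4 → ℝ) 3) = -1 from rfl] at this
  rw [← heq]
  exact this

lemma continuous_dot_add {n : ℕ} (w : Fin n → ℝ) (c : ℝ) :
    Continuous fun z : Fin n → ℝ => dotProduct w z + c := by
  have : Continuous fun z : Fin n → ℝ => ∑ i, w i * z i :=
    continuous_finset_sum _ fun i _ => continuous_const.mul (continuous_apply i)
  exact this.add continuous_const

lemma netFun_dense {n : ℕ} (S : Set (Fin n → ℝ)) (hS : IsCompact S) (g : (Fin n → ℝ) → ℝ)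
    (hg : Continuous g) (ε : ℝ) (hε : 0 < ε) :
    ∃ h, NetFun h ∧ ∀ y ∈ S, |h y - g y| ≤ ε := by
  haveI : CompactSpace S := isCompact_iff_compactSpace.mp hS
  set L : Set C(S, ℝ) := {F | ∃ h, NetFun h ∧ ∀ y : S, F y = h y.1} with hLdef
  have hconst : ∀ c : ℝ, (ContinuousMap.const S c) ∈ L :=
    fun c => ⟨fun _ => c, netFun_const c, fun y => rfl⟩
  have hne : L.Nonempty := ⟨_, hconst 0⟩
  have hinf : ∀ᵉ (F ∈ L) (G ∈ L), F ⊓ G ∈ L := by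
    rintro F ⟨h1, hh1, hF⟩ G ⟨h2, hh2, hG⟩
    exact ⟨fun z => min (h1 z) (h2 z), netFun_min hh1 hh2,
      fun y => by simp [ContinuousMap.inf_apply, hF y, hG y]⟩
  have hsup : ∀ᵉ (F ∈ L) (G ∈ L), F ⊔ G ∈ L := by
    rintro F ⟨h1, hh1, hF⟩ G ⟨h2, hh2, hG⟩
    exact ⟨fun z => max (h1 z) (h2 z), netFun_max hh1 hh2,
      fun y => by simp [ContinuousMap.sup_apply, hF y, hG y]⟩
  have hsep : L.SeparatesPointsStrongly := by
    intro v x y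
    by_cases hxy : x = y
    · subst hxy
      exact ⟨_, hconst (v x), rfl, rfl⟩
    · have hxy1 : (x : Fin n → ℝ) ≠ (y : Fin n → ℝ) := fun h => hxy (Subtype.ext h)
      set w : Fin n → ℝ := (x : Fin n → ℝ) - (y : Fin n → ℝ) with hw
      have hD : dotProduct w ((x : Fin n → ℝ)) - dotProduct w ((y : Fin n → ℝ))
          = ∑ i, w i * w i := by
        rw [← dotProduct_sub, hw]
        rfl
      have hpos : 0 < ∑ i, w i * w i := by
        obtain ⟨i, hi⟩ := Function.ne_iff.mp hxy1
        have hwi : w i ≠ 0 := sub_ne_zero_of_ne hi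
        exact Finset.sum_pos' (fun j _ => mul_self_nonneg (w j))
          ⟨i, Finset.mem_univ i, mul_self_pos.mpr hwi⟩
      set D : ℝ := dotProduct w ((y : Fin n → ℝ)) - dotProduct w ((x : Fin n → ℝ))
        with hDdef
      have hDne : D ≠ 0 := by
        have : D = -(∑ i, w i * w i) := by rw [hDdef, ← hD]; ring
        rw [this]
        exact neg_ne_zero.mpr (ne_of_gt hpos)
      set c : ℝ := (v y - v x) / D with hc
      set h : (Fin n → ℝ) → ℝ :=
        fun z => dotProduct (c • w) z + (v x - c * dotProduct w (x : Fin n → ℝ))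
        with hh
      have hhx : h x = v x := by
        rw [hh]
        simp only [smul_dotProduct, smul_eq_mul]
        ring
      have hhy : h y = v y := by
        rw [hh]
        simp only [smul_dotProduct, smul_eq_mul]
        have : c * D = v y - v x := by rw [hc]; field_simp
        rw [hDdef] at this
        nlinarith [this]
      refine ⟨ContinuousMap.mk (fun s : S => h s.1)
        ((continuous_dot_add (c • w) _).comp continuous_subtype_val), ?_, hhx, hhy⟩
      exact ⟨h, netFun_affine _ _, fun s => rfl⟩
  have hclo : closure L = ⊤ := ContinuousMap.sublattice_closure_eq_top L hne hinf hsup hsep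
  set G : C(S, ℝ) := ContinuousMap.mk (fun s : S => g s.1) (hg.comp continuous_subtype_val)
  have hG : G ∈ closure L := by rw [hclo]; trivial
  obtain ⟨F, hFL, hdist⟩ := Metric.mem_closure_iff.mp hG ε hε
  obtain ⟨h, hh, hFh⟩ := hFL
  refine ⟨h, hh, fun y hy => ?_⟩
  have := ContinuousMap.dist_apply_le_dist (f := G) (g := F) (⟨y, hy⟩ : S)
  rw [hFh ⟨y, hy⟩] at this
  have : dist (g y) (h y) ≤ dist G F := this
  rw [Real.dist_eq] at this
  rw [abs_sub_comm]
  linarith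

/-- **Theorem 1.** Learned-context neural networks with a single scalar task parameter are
universal multi-task approximators: for any compact `K ⊆ ℝ^d`, continuous tasks
`f_1, …, f_m : K → ℝ` and `ε > 0`, there exist a ReLU network `N : ℝ^{d+1} → ℝ` and scalars
`β_1, …, β_m ∈ ℝ` with `|N(x, β_j) − f_j(x)| ≤ ε` for all tasks `j` and all `x ∈ K`. -/
theorem learned_context_universal_approximation
    (d m : ℕ) (hm : 1 ≤ m) (K : Set (Fin d → ℝ)) (hK : IsCompact K)
    (f : Fin m → (Fin d → ℝ) → ℝ) (hf : ∀ j, ContinuousOn (f j) K)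
    (ε : ℝ) (hε : 0 < ε) :
    ∃ (N : (Fin (d + 1) → ℝ) → (Fin 1 → ℝ)) (β : Fin m → ℝ), IsReLUNet N ∧
      ∀ (j : Fin m) (x : Fin d → ℝ), x ∈ K →
        |N (Fin.append x (fun _ : Fin 1 => β j)) 0 - f j x| ≤ ε := by
  -- Tietze extensions of the tasks
  have hKc : IsClosed K := hK.isClosed
  have H : ∀ j, ∃ G : C((Fin d → ℝ), ℝ), ∀ x ∈ K, G x = f j x := by
    intro j
    obtain ⟨G, hG⟩ := (ContinuousMap.mk (K.restrict (f j)) (hf j).restrict).exists_restrict_eq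
      (Y := ℝ) hKc
    exact ⟨G, fun x hx => by exact DFunLike.congr_fun hG ⟨x, hx⟩⟩
  choose G hG using H
  -- the interpolating continuous function on ℝ^{d+1}
  set g : (Fin (d + 1) → ℝ) → ℝ := fun y =>
    ∑ j : Fin m, max (1 - |y (Fin.natAdd d 0) - ((j : ℕ) : ℝ)|) 0
      * G j (fun i => y (Fin.castAdd 1 i)) with hgdef
  have hgc : Continuous g := by
    refine continuous_finset_sum _ fun j _ => Continuous.mul ?_ ?_
    · exact (continuous_const.sub
        (((continuous_apply (Fin.natAdd d 0)).sub continuous_const).abs)).max continuous_const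
    · exact (G j).continuous.comp (continuous_pi fun i => continuous_apply (Fin.castAdd 1 i))
  -- the compact set in ℝ^{d+1}
  have happ : Continuous (fun p : (Fin d → ℝ) × ℝ => Fin.append p.1 (fun _ : Fin 1 => p.2)) := by
    apply continuous_pi
    intro i
    refine Fin.addCases (fun i1 => ?_) (fun i2 => ?_) i
    · simp only [Fin.append_left]
      exact (continuous_apply i1).comp continuous_fst
    · simp only [Fin.append_right]
      exact continuous_snd
  set S : Set (Fin (d + 1) → ℝ) :=
    (fun p : (Fin d → ℝ) × ℝ => Fin.append p.1 (fun _ : Fin 1 => p.2)) ''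
      (K ×ˢ Set.Icc (0 : ℝ) m) with hSdef
  have hS : IsCompact S := (hK.prod isCompact_Icc).image happ
  obtain ⟨h, hh, hhg⟩ := netFun_dense S hS g hgc ε hε
  refine ⟨fun z (_ : Fin 1) => h z, fun j => ((j : ℕ) : ℝ), hh, fun j x hx => ?_⟩
  set y : Fin (d + 1) → ℝ := Fin.append x (fun _ : Fin 1 => ((j : ℕ) : ℝ)) with hy
  have hyS : y ∈ S := by
    refine ⟨(x, ((j : ℕ) : ℝ)), ⟨hx, ⟨Nat.cast_nonneg _, ?_⟩⟩, rfl⟩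
    show ((j : ℕ) : ℝ) ≤ (m : ℝ)
    exact_mod_cast le_of_lt j.isLt
  have hgy : g y = f j x := by
    have hy1 : y (Fin.natAdd d 0) = ((j : ℕ) : ℝ) := Fin.append_right _ _ _
    have hy2 : (fun i => y (Fin.castAdd 1 i)) = x := funext fun i => Fin.append_left _ _ _
    rw [hgdef]
    have : ∀ j' : Fin m, j' ≠ j →
        max (1 - |y (Fin.natAdd d 0) - ((j' : ℕ) : ℝ)|) 0 * G j' (fun i => y (Fin.castAdd 1 i))
          = 0 := by
      intro j' hj'
      have hne : (j : ℕ) ≠ (j' : ℕ) := fun hc => hj' (Fin.ext hc.symm)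
      have hone : (1 : ℝ) ≤ |((j : ℕ) : ℝ) - ((j' : ℕ) : ℝ)| := by
        rcases Nat.lt_or_ge (j : ℕ) (j' : ℕ) with hlt | hge
        · have h1 : ((j : ℕ) : ℝ) + 1 ≤ ((j' : ℕ) : ℝ) := by exact_mod_cast hlt
          calc (1 : ℝ) ≤ ((j' : ℕ) : ℝ) - ((j : ℕ) : ℝ) := by linarith
            _ ≤ |((j' : ℕ) : ℝ) - ((j : ℕ) : ℝ)| := le_abs_self _
            _ = |((j : ℕ) : ℝ) - ((j' : ℕ) : ℝ)| := abs_sub_comm _ _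
        · have hlt : (j' : ℕ) < (j : ℕ) := lt_of_le_of_ne hge (Ne.symm hne)
          have h1 : ((j' : ℕ) : ℝ) + 1 ≤ ((j : ℕ) : ℝ) := by exact_mod_cast hlt
          calc (1 : ℝ) ≤ ((j : ℕ) : ℝ) - ((j' : ℕ) : ℝ) := by linarith
            _ ≤ |((j : ℕ) : ℝ) - ((j' : ℕ) : ℝ)| := le_abs_self _
      rw [hy1, max_eq_right (by linarith), zero_mul]
    beta_reduce
    rw [Finset.sum_eq_single j (fun j' _ hj' => this j' hj') (fun hj => absurd (Finset.mem_univ j) hj)]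
    rw [hy1, hy2, sub_self, abs_zero, sub_zero, max_eq_left zero_le_one, one_mul]
    exact hG j x hx
  have := hhg y hyS
  rw [hgy] at this
  exact this
end

section
/- Let m ≥ 1 and k < m. There exists ε > 0, depending only on m and k, such that for every function h : ℝ → ℝ^k and all vectors β_1, …, β_m ∈ ℝ^k, there exist j ∈ {1, …, m} and x ∈ [−π, π] with |⟨β_j, h(x)⟩ − sin(j·x)| ≥ ε. (Proposition 2: last-layer multi-task architectures with fewer than m task parameters cannot approximate the m sine-wave tasks f_j(x) = sin(jx) arbitrarily well.) -/
open Real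

open Polynomial

lemma chebU_aux : ∀ n : ℕ, (Chebyshev.U ℝ (n:ℤ)).natDegree ≤ n ∧ (Chebyshev.U ℝ (n:ℤ)).coeff n = 2 ^ n := by
  have key : ∀ n : ℕ,
      ((Chebyshev.U ℝ (n:ℤ)).natDegree ≤ n ∧ (Chebyshev.U ℝ (n:ℤ)).coeff n = 2 ^ n) ∧
      ((Chebyshev.U ℝ ((n:ℤ)+1)).natDegree ≤ n+1 ∧ (Chebyshev.U ℝ ((n:ℤ)+1)).coeff (n+1) = 2 ^ (n+1)) := by
    intro n
    induction n with
    | zero =>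
      refine ⟨⟨?_, ?_⟩, ?_, ?_⟩
      · simp [Chebyshev.U_zero]
      · simp [Chebyshev.U_zero]
      · show (Chebyshev.U ℝ 1).natDegree ≤ 1
        rw [Chebyshev.U_one]; compute_degree
      · show (Chebyshev.U ℝ 1).coeff 1 = 2 ^ 1
        simp [Chebyshev.U_one]
    | succ n ih =>
      obtain ⟨⟨hd0, hc0⟩, hd1, hc1⟩ := ih
      refine ⟨⟨by exact_mod_cast hd1, by exact_mod_cast hc1⟩, ?_, ?_⟩
      · have h2 : Chebyshev.U ℝ ((n:ℤ)+1+1) = 2 * X * Chebyshev.U ℝ ((n:ℤ)+1) - Chebyshev.U ℝ n := by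
          have := Chebyshev.U_add_two ℝ (n:ℤ)
          convert this using 2 <;> ring
        rw [show ((n+1:ℕ):ℤ)+1 = (n:ℤ)+1+1 by push_cast; ring, h2]
        refine le_trans (natDegree_sub_le _ _) (max_le ?_ (le_trans hd0 (by omega)))
        refine le_trans (natDegree_mul_le) ?_
        have : (2 * X : ℝ[X]).natDegree ≤ 1 := by compute_degree
        omega
      · have h2 : Chebyshev.U ℝ ((n:ℤ)+1+1) = 2 * X * Chebyshev.U ℝ ((n:ℤ)+1) - Chebyshev.U ℝ n := by
          have := Chebyshev.U_add_two ℝ (n:ℤ)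
          convert this using 2 <;> ring
        rw [show ((n+1:ℕ):ℤ)+1 = (n:ℤ)+1+1 by push_cast; ring, h2, coeff_sub]
        have e1 : (2 * X * Chebyshev.U ℝ ((n:ℤ)+1)).coeff (n+1+1) = 2 * (Chebyshev.U ℝ ((n:ℤ)+1)).coeff (n+1) := by
          rw [mul_assoc, show (2:ℝ[X]) = C 2 from (map_ofNat C 2).symm, coeff_C_mul, coeff_X_mul]
        have e2 : (Chebyshev.U ℝ (n:ℤ)).coeff (n+1+1) = 0 :=
          coeff_eq_zero_of_natDegree_lt (lt_of_le_of_lt hd0 (by omega))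
        rw [e1, e2, hc1]
        ring
  exact fun n => (key n).1

open Real in
lemma sine_matrix_det_ne_zero (m : ℕ) (hm : 1 ≤ m) :
    (Matrix.of fun i j : Fin m => Real.sin (((j:ℕ) + 1) * (((i:ℝ)+1) * π / (m+1)))).det ≠ 0 := by
  set x : Fin m → ℝ := fun i => ((i:ℝ)+1) * π / (m+1) with hxdef
  have hπ := Real.pi_pos
  have hm1 : (0:ℝ) < (m:ℝ) + 1 := by positivity
  have hx0 : ∀ i, 0 < x i := by
    intro i; apply div_pos (by positivity) hm1
  have hxπ : ∀ i, x i < π := by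
    intro i
    rw [hxdef, div_lt_iff₀ hm1]
    have : (i:ℝ) + 1 < (m:ℝ) + 1 := by
      have := i.isLt; push_cast; exact_mod_cast by exact_mod_cast Nat.add_lt_add_right this 1
    nlinarith
  have hxinj : Function.Injective x := by
    intro i i' hii
    have : (i:ℝ) = (i':ℝ) := by
      simp only [hxdef] at hii
      have h2 := (div_left_inj' hm1.ne').mp hii
      have h3 := mul_right_cancel₀ hπ.ne' h2
      linarith
    exact Fin.ext (by exact_mod_cast this)
  set t : Fin m → ℝ := fun i => Real.cos (x i) with htdef
  have htinj : Function.Injective t := by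
    intro i i' hii
    exact hxinj (Real.injOn_cos ⟨(hx0 i).le, (hxπ i).le⟩ ⟨(hx0 i').le, (hxπ i').le⟩ hii)
  set M : Matrix (Fin m) (Fin m) ℝ := Matrix.of fun i j => (Polynomial.Chebyshev.U ℝ ((j:ℕ):ℤ)).eval (t i) with hMdef
  set W : Matrix (Fin m) (Fin m) ℝ := Matrix.of fun r j => (Polynomial.Chebyshev.U ℝ ((j:ℕ):ℤ)).coeff r with hWdef
  have hMVW : M = Matrix.vandermonde t * W := by
    ext i j
    rw [Matrix.mul_apply]
    have hdeg : (Polynomial.Chebyshev.U ℝ ((j:ℕ):ℤ)).natDegree < m :=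
      lt_of_le_of_lt (chebU_aux (j:ℕ)).1 j.isLt
    show (Polynomial.Chebyshev.U ℝ ((j:ℕ):ℤ)).eval (t i) = _
    rw [Polynomial.eval_eq_sum_range' hdeg, ← Fin.sum_univ_eq_sum_range]
    refine Finset.sum_congr rfl fun r _ => ?_
    rw [Matrix.vandermonde_apply]
    show (Polynomial.Chebyshev.U ℝ ((j:ℕ):ℤ)).coeff r * t i ^ (r:ℕ)
        = t i ^ (r:ℕ) * (Polynomial.Chebyshev.U ℝ ((j:ℕ):ℤ)).coeff r
    ring
  have hW : W.det ≠ 0 := by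
    have htri : W.BlockTriangular id := by
      intro r j hjr
      have : (Polynomial.Chebyshev.U ℝ ((j:ℕ):ℤ)).natDegree < (r:ℕ) :=
        lt_of_le_of_lt (chebU_aux (j:ℕ)).1 hjr
      exact Polynomial.coeff_eq_zero_of_natDegree_lt this
    rw [Matrix.det_of_upperTriangular htri]
    apply Finset.prod_ne_zero_iff.mpr
    intro j _
    show (Polynomial.Chebyshev.U ℝ ((j:ℕ):ℤ)).coeff j ≠ 0
    rw [(chebU_aux (j:ℕ)).2]
    positivity
  have hV : (Matrix.vandermonde t).det ≠ 0 := Matrix.det_vandermonde_ne_zero_iff.mpr htinj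
  have hAM : (Matrix.of fun i j : Fin m => Real.sin (((j:ℕ) + 1) * x i))
      = Matrix.diagonal (fun i => Real.sin (x i)) * M := by
    ext i j
    rw [Matrix.diagonal_mul]
    show Real.sin (((j:ℕ) + 1) * x i) = Real.sin (x i) * (Polynomial.Chebyshev.U ℝ ((j:ℕ):ℤ)).eval (Real.cos (x i))
    rw [mul_comm (Real.sin (x i)), Polynomial.Chebyshev.U_real_cos (x i) ((j:ℕ):ℤ)]
    push_cast
    ring_nf
  rw [show (Matrix.of fun i j : Fin m => Real.sin (((j:ℕ) + 1) * (((i:ℝ)+1) * π / (m+1))))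
      = Matrix.of fun i j : Fin m => Real.sin (((j:ℕ) + 1) * x i) from rfl, hAM, Matrix.det_mul,
    Matrix.det_diagonal, hMVW, Matrix.det_mul]
  refine mul_ne_zero (Finset.prod_ne_zero_iff.mpr fun i _ => ?_) (mul_ne_zero hV hW)
  exact (Real.sin_pos_of_pos_of_lt_pi (hx0 i) (hxπ i)).ne'

/-- **Proposition 2.** Last-layer multi-task architectures with fewer than `m` task parameters
cannot approximate the `m` sine-wave tasks `f_j(x) = sin(jx)` on `[−π, π]` arbitrarily well:
for `k < m` there is an `ε > 0`, depending only on `m` and `k`, such that for every shared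
feature map `h : ℝ → ℝ^k` and all task vectors `β_1, …, β_m ∈ ℝ^k` some task `j` and some
`x ∈ [−π, π]` have `|⟨β_j, h(x)⟩ − sin(jx)| ≥ ε`. -/
theorem last_layer_mtl_not_universal (m k : ℕ) (hm : 1 ≤ m) (hk : k < m) :
    ∃ ε > (0 : ℝ), ∀ (h : ℝ → Fin k → ℝ) (β : Fin m → Fin k → ℝ),
      ∃ (j : Fin m) (x : ℝ), x ∈ Set.Icc (-π) π ∧
        ε ≤ |(∑ i, β j i * h x i) - Real.sin (((j : ℕ) + 1) * x)| := by

  have hπ := Real.pi_pos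
  set x : Fin m → ℝ := fun i => ((i:ℝ)+1) * π / (m+1) with hxdef
  have hm1 : (0:ℝ) < (m:ℝ) + 1 := by positivity
  have hx0 : ∀ i, 0 < x i := fun i => div_pos (by positivity) hm1
  have hxπ : ∀ i, x i < π := by
    intro i
    rw [hxdef, div_lt_iff₀ hm1]
    have h1 : (i:ℝ) + 1 < (m:ℝ) + 1 := by
      have := i.isLt
      have : (i:ℝ) < (m:ℝ) := by exact_mod_cast this
      linarith
    nlinarith
  have hxIcc : ∀ i, x i ∈ Set.Icc (-π) π :=
    fun i => ⟨by linarith [hx0 i], (hxπ i).le⟩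
  -- the target matrix
  set A : Fin m → Fin m → ℝ := fun i j => Real.sin (((j:ℕ) + 1) * x i) with hAdef
  have hA : (Matrix.of A).det ≠ 0 := sine_matrix_det_ne_zero m hm
  -- continuity of determinant
  have hF : Continuous fun g : Fin m → Fin m → ℝ => (Matrix.of g).det := by
    apply Continuous.matrix_det
    exact continuous_pi fun i => continuous_pi fun j =>
      (continuous_apply j).comp (continuous_apply i)
  have hopen : IsOpen {g : Fin m → Fin m → ℝ | (Matrix.of g).det ≠ 0} :=
    isOpen_compl_singleton.preimage hF
  obtain ⟨δ, hδ, hball⟩ := Metric.isOpen_iff.mp hopen A hA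
  refine ⟨δ/2, by positivity, ?_⟩
  intro h β
  by_contra hcon
  push_neg at hcon
  set B : Fin m → Fin m → ℝ := fun i j => ∑ l, β j l * h (x i) l with hBdef
  have hdist : dist B A < δ := by
    rw [dist_pi_lt_iff hδ]
    intro i
    rw [dist_pi_lt_iff hδ]
    intro j
    rw [Real.dist_eq]
    have := hcon j (x i) (hxIcc i)
    calc |B i j - A i j| < δ/2 := this
      _ < δ := by linarith
  have hBdet : (Matrix.of B).det ≠ 0 := hball (Metric.mem_ball.mpr hdist)
  have hBfact : Matrix.of B =
      (Matrix.of fun (i : Fin m) (l : Fin k) => h (x i) l) *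
      (Matrix.of fun (l : Fin k) (j : Fin m) => β j l) := by
    ext i j
    rw [Matrix.mul_apply]
    simp [hBdef, mul_comm]
  have hrank1 : (Matrix.of B).rank ≤ k := by
    rw [hBfact]
    refine le_trans (Matrix.rank_mul_le_left _ _) ?_
    simpa using Matrix.rank_le_card_width (Matrix.of fun (i : Fin m) (l : Fin k) => h (x i) l)
  have hrank2 : (Matrix.of B).rank = m := by
    rw [Matrix.rank_of_isUnit _ ((Matrix.isUnit_iff_isUnit_det _).mpr (isUnit_iff_ne_zero.mpr hBdet))]
    simp
  omega
end

section
/- Let V be a real inner product space, let v_1, …, v_m ∈ V be orthonormal, and let S ⊆ V be a linear subspace of dimension at most k with k < m. Then the squared distances from the v_j to S satisfy Σ_{j=1}^m dist(v_j, S)² ≥ m − k; in particular there exists j with dist(v_j, S) ≥ √((m − k)/m) > 0. -/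
open RealInnerProductSpace
set_option maxHeartbeats 800000
set_option synthInstance.maxHeartbeats 200000

/-- **Quantitative fact behind Proposition 2.** If `v_1, …, v_m` are orthonormal in a real
inner product space `V` and `S ⊆ V` is a linear subspace of dimension at most `k < m`, then
`Σ_j dist(v_j, S)² ≥ m − k`; in particular some `j` has
`dist(v_j, S) ≥ √((m − k)/m) > 0`. -/
theorem orthonormal_far_from_low_dim_subspace
    {V : Type*} [NormedAddCommGroup V] [InnerProductSpace ℝ V]
    (m k : ℕ) (hk : k < m) (v : Fin m → V) (hv : Orthonormal ℝ v)
    (S : Submodule ℝ V) (hS : Module.rank ℝ S ≤ (k : Cardinal)) :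
    ((m : ℝ) - k) ≤ ∑ j : Fin m, Metric.infDist (v j) (S : Set V) ^ 2 ∧
      ∃ j : Fin m,
        Real.sqrt (((m : ℝ) - k) / m) ≤ Metric.infDist (v j) (S : Set V) ∧
        0 < Metric.infDist (v j) (S : Set V) := by
  classical
  haveI : FiniteDimensional ℝ S := by
    exact Module.rank_lt_aleph0_iff.mp (hS.trans_lt (Cardinal.nat_lt_aleph0 k))
  haveI : CompleteSpace S := FiniteDimensional.complete ℝ S
  set n := Module.finrank ℝ S with hn
  have hnk : n ≤ k := Module.finrank_le_of_rank_le hS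
  set P := S.orthogonalProjectionOnto with hP
  -- infDist equals distance to the orthogonal projection
  have hdist : ∀ x : V, Metric.infDist x (S : Set V) = ‖x - P x‖ := by
    intro x
    rw [Metric.infDist_eq_iInf, show ‖x - (P x : V)‖ = ‖x - S.starProjection x‖ from rfl,
      Submodule.starProjection_minimal]
    congr 1
    ext w
    rw [dist_eq_norm]
  -- Pythagoras: ‖x - P x‖² = ‖x‖² - ‖P x‖²
  have hpyth : ∀ x : V, ‖x - P x‖ ^ 2 = ‖x‖ ^ 2 - ‖(P x : V)‖ ^ 2 := by
    intro x
    have horth : ⟪(P x : V), x - P x⟫ = 0 :=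
      (S.mem_orthogonal _).1 (Submodule.sub_starProjection_mem_orthogonal x) _ (P x).2
    have := norm_add_sq_eq_norm_sq_add_norm_sq_of_inner_eq_zero (𝕜 := ℝ)
      (P x : V) (x - P x) horth
    have hx : (P x : V) + (x - P x) = x := by abel
    rw [hx] at this
    linarith
  -- sum of squared norms of projections is at most k
  have hbessel : ∑ j : Fin m, ‖(P (v j) : V)‖ ^ 2 ≤ (k : ℝ) := by
    obtain e := stdOrthonormalBasis ℝ S
    have hnorm : ∀ j, ‖(P (v j) : V)‖ ^ 2 = ∑ i : Fin n, ⟪v j, ((e i : S) : V)⟫ ^ 2 := by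
      intro j
      have h1 : ∑ i : Fin n, ⟪(P (v j) : S), e i⟫ * ⟪e i, (P (v j) : S)⟫
          = ⟪(P (v j) : S), (P (v j) : S)⟫ := e.sum_inner_mul_inner _ _
      have h2 : ∀ i : Fin n, ⟪e i, (P (v j) : S)⟫ = ⟪((e i : S) : V), v j⟫ :=
        fun i => Submodule.inner_orthogonalProjectionOnto_eq_of_mem_left _ _
      rw [show ‖(P (v j) : V)‖ = ‖P (v j)‖ from rfl, ← real_inner_self_eq_norm_sq, ← h1]
      refine Finset.sum_congr rfl fun i _ => ?_
      have hA : (inner ℝ (e i) (P (v j) : S) : ℝ) = inner ℝ (v j) ((e i : S) : V) := by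
        rw [h2 i, real_inner_comm]
      have hB : (inner ℝ (P (v j) : S) (e i) : ℝ) = inner ℝ (v j) ((e i : S) : V) := by
        rw [real_inner_comm]; exact hA
      rw [hA, hB, sq]
    calc ∑ j : Fin m, ‖(P (v j) : V)‖ ^ 2
        = ∑ j : Fin m, ∑ i : Fin n, ⟪v j, ((e i : S) : V)⟫ ^ 2 := by
          exact Finset.sum_congr rfl fun j _ => hnorm j
      _ = ∑ i : Fin n, ∑ j : Fin m, ⟪v j, ((e i : S) : V)⟫ ^ 2 := Finset.sum_comm
      _ ≤ ∑ i : Fin n, (1 : ℝ) := by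
          refine Finset.sum_le_sum fun i _ => ?_
          have := hv.sum_inner_products_le (𝕜 := ℝ) ((e i : S) : V) (s := Finset.univ)
          have he : ‖((e i : S) : V)‖ = 1 := by
            rw [Submodule.norm_coe]; exact e.orthonormal.1 i
          simp only [Real.norm_eq_abs, sq_abs] at this
          calc ∑ j : Fin m, ⟪v j, ((e i : S) : V)⟫ ^ 2 ≤ ‖((e i : S) : V)‖ ^ 2 := this
            _ = 1 := by rw [he]; norm_num
      _ = (n : ℝ) := by simp
      _ ≤ (k : ℝ) := by exact_mod_cast hnk
  have hmain : ((m : ℝ) - k) ≤ ∑ j : Fin m, Metric.infDist (v j) (S : Set V) ^ 2 := by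
    have : ∑ j : Fin m, Metric.infDist (v j) (S : Set V) ^ 2
        = ∑ j : Fin m, (1 - ‖(P (v j) : V)‖ ^ 2) := by
      refine Finset.sum_congr rfl fun j _ => ?_
      rw [hdist, hpyth, hv.1 j]; norm_num
    rw [this, Finset.sum_sub_distrib]
    simp only [Finset.sum_const, Finset.card_univ, Fintype.card_fin, nsmul_eq_mul, mul_one]
    linarith
  refine ⟨hmain, ?_⟩
  have hm0 : (0 : ℝ) < m := by exact_mod_cast Nat.lt_of_le_of_lt (Nat.zero_le k) hk
  have hmk : (0 : ℝ) < (m : ℝ) - k := by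
    have : (k : ℝ) < m := by exact_mod_cast hk
    linarith
  have hdivpos : (0 : ℝ) < ((m : ℝ) - k) / m := div_pos hmk hm0
  have hsqrt_pos : 0 < Real.sqrt (((m : ℝ) - k) / m) := Real.sqrt_pos.mpr hdivpos
  have hex : ∃ j : Fin m, Real.sqrt (((m : ℝ) - k) / m) ≤ Metric.infDist (v j) (S : Set V) := by
    by_contra h
    push_neg at h
    haveI : Nonempty (Fin m) := ⟨⟨0, Nat.lt_of_le_of_lt (Nat.zero_le k) hk⟩⟩
    have hlt : ∀ j ∈ Finset.univ, Metric.infDist (v j) ((S : Set V)) ^ 2 < ((m : ℝ) - k) / m := by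
      intro j _
      have hnn : 0 ≤ Metric.infDist (v j) (S : Set V) := Metric.infDist_nonneg
      have hsq : Metric.infDist (v j) (S : Set V) ^ 2 < Real.sqrt (((m : ℝ) - k) / m) ^ 2 := by
        apply sq_lt_sq' _ (h j)
        linarith
      rwa [Real.sq_sqrt hdivpos.le] at hsq
    have hsum : ∑ j : Fin m, Metric.infDist (v j) (S : Set V) ^ 2
        < ∑ _j : Fin m, ((m : ℝ) - k) / m :=
      Finset.sum_lt_sum_of_nonempty Finset.univ_nonempty hlt
    rw [Finset.sum_const, Finset.card_univ, Fintype.card_fin, nsmul_eq_mul,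
      mul_div_cancel₀ _ hm0.ne'] at hsum
    linarith
  obtain ⟨j, hj⟩ := hex
  exact ⟨j, hj, lt_of_lt_of_le hsqrt_pos hj⟩
end

section
/- Let σ(t) = max(t, 0), and for L = (L₁, L₂, L₃, L₄) ∈ ℝ⁴ define the example network N_L : ℝ × ℝ → ℝ by N_L(x, β) = σ(2h₁ − 4h₂) + σ(2h₃ − 4h₄), where h_p = σ(x + L_p·β − (p−1)/2) for p = 1, 2, 3, 4. Then with L = (0, −1/2, −1, −3/2) (the task-parameter column of the first layer equal to the first-layer bias), for every β ∈ (−1, 1) and every x ∈ ℝ, N_L(x, β) = (1 + β)·T(x/(1 + β)); that is, the network output is the base shape dilated by the factor 1 + β in both coordinates. (Appendix A.1, dilation effect.) -/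
/-- The double-triangle base shape: piecewise linear interpolation of
`(0,0), (1/2, 1), (1, 0), (3/2, 1), (2, 0)`, zero outside `[0, 2]`. -/
noncomputable def baseShape (x : ℝ) : ℝ :=
  if x ≤ 0 then 0
  else if x ≤ 1 / 2 then 2 * x
  else if x ≤ 1 then 2 - 2 * x
  else if x ≤ 3 / 2 then 2 * x - 2
  else if x ≤ 2 then 4 - 2 * x
  else 0

/-- The example network of Appendix A: `N_L(x, β) = σ(2h₁ − 4h₂) + σ(2h₃ − 4h₄)` with
hidden units `h_p = σ(x + L_p·β − (p−1)/2)`, where `σ(t) = max(0, t)`. -/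
noncomputable def exampleNet (L : Fin 4 → ℝ) (x β : ℝ) : ℝ :=
  let h : Fin 4 → ℝ := fun p => max 0 (x + L p * β - ((p : ℕ) : ℝ) / 2)
  max 0 (2 * h 0 - 4 * h 1) + max 0 (2 * h 2 - 4 * h 3)

/-- The undilated network (at scale 1) computes the base shape. -/
lemma exampleNet_key (u : ℝ) :
    max 0 (2 * max 0 u - 4 * max 0 (u - 1/2)) +
      max 0 (2 * max 0 (u - 1) - 4 * max 0 (u - 3/2)) = baseShape u := by
  unfold baseShape
  split_ifs with h1 h2 h3 h4 h5
  · rw [max_eq_left h1, max_eq_left (show u - 1/2 ≤ 0 by linarith),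
      max_eq_left (show u - 1 ≤ 0 by linarith), max_eq_left (show u - 3/2 ≤ 0 by linarith)]
    norm_num
  · rw [max_eq_right (show (0:ℝ) ≤ u by linarith), max_eq_left (show u - 1/2 ≤ 0 by linarith),
      max_eq_left (show u - 1 ≤ 0 by linarith), max_eq_left (show u - 3/2 ≤ 0 by linarith),
      max_eq_right (show (0:ℝ) ≤ 2*u - 4*0 by linarith)]
    norm_num
  · rw [max_eq_right (show (0:ℝ) ≤ u by linarith),
      max_eq_right (show (0:ℝ) ≤ u - 1/2 by linarith),
      max_eq_left (show u - 1 ≤ 0 by linarith), max_eq_left (show u - 3/2 ≤ 0 by linarith),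
      max_eq_right (show (0:ℝ) ≤ 2*u - 4*(u - 1/2) by linarith)]
    norm_num
    ring
  · rw [max_eq_right (show (0:ℝ) ≤ u by linarith),
      max_eq_right (show (0:ℝ) ≤ u - 1/2 by linarith),
      max_eq_right (show (0:ℝ) ≤ u - 1 by linarith),
      max_eq_left (show u - 3/2 ≤ 0 by linarith),
      max_eq_left (show 2*u - 4*(u - 1/2) ≤ 0 by linarith),
      max_eq_right (show (0:ℝ) ≤ 2*(u - 1) - 4*0 by linarith)]
    ring
  · rw [max_eq_right (show (0:ℝ) ≤ u by linarith),
      max_eq_right (show (0:ℝ) ≤ u - 1/2 by linarith),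
      max_eq_right (show (0:ℝ) ≤ u - 1 by linarith),
      max_eq_right (show (0:ℝ) ≤ u - 3/2 by linarith),
      max_eq_left (show 2*u - 4*(u - 1/2) ≤ 0 by linarith),
      max_eq_right (show (0:ℝ) ≤ 2*(u - 1) - 4*(u - 3/2) by linarith)]
    ring
  · rw [max_eq_right (show (0:ℝ) ≤ u by linarith),
      max_eq_right (show (0:ℝ) ≤ u - 1/2 by linarith),
      max_eq_right (show (0:ℝ) ≤ u - 1 by linarith),
      max_eq_right (show (0:ℝ) ≤ u - 3/2 by linarith),
      max_eq_left (show 2*u - 4*(u - 1/2) ≤ 0 by linarith),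
      max_eq_left (show 2*(u - 1) - 4*(u - 3/2) ≤ 0 by linarith)]
    ring

/-- **Dilation effect (Appendix A.1).** With `L = (0, −1/2, −1, −3/2)` (the task-parameter
column of the first layer equal to the first-layer bias), for every `β ∈ (−1, 1)` the example
network computes the base shape dilated by the factor `1 + β` in both coordinates:
`N_L(x, β) = (1 + β)·T(x/(1 + β))`. -/
theorem exampleNet_dilation (β : ℝ) (hβ : β ∈ Set.Ioo (-1 : ℝ) 1) (x : ℝ) :
    exampleNet (fun p => -(((p : ℕ) : ℝ) / 2)) x β = (1 + β) * baseShape (x / (1 + β)) := by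
  obtain ⟨hb1, hb2⟩ := hβ
  have hs : (0:ℝ) < 1 + β := by linarith
  have hne : (1:ℝ) + β ≠ 0 := ne_of_gt hs
  set u : ℝ := x / (1 + β) with hu
  have hx : x = (1 + β) * u := by rw [hu]; field_simp
  have M : ∀ t : ℝ, (0:ℝ) ⊔ ((1 + β) * t) = (1 + β) * ((0:ℝ) ⊔ t) := fun t => by
    rw [mul_max_of_nonneg _ _ hs.le, mul_zero]
  unfold exampleNet
  simp only [Fin.isValue, Fin.val_zero, Fin.val_one, Nat.cast_zero, Nat.cast_one,
    show ((2:Fin 4):ℕ) = 2 from rfl, show ((3:Fin 4):ℕ) = 3 from rfl,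
    Nat.cast_ofNat]
  norm_num
  rw [show x = (1 + β) * u from hx,
    show (1+β) * u + -(1/2*β) - 1/2 = (1+β) * (u - 1/2) by ring,
    show (1+β) * u + -β - 1 = (1+β) * (u - 1) by ring,
    show (1+β) * u + -(3/2*β) - 3/2 = (1+β) * (u - 3/2) by ring,
    show (0:ℝ) ⊔ ((1+β)*u) = (1+β) * ((0:ℝ) ⊔ u) from M u,
    M (u - 1/2), M (u - 1), M (u - 3/2),
    show (2:ℝ) * ((1+β) * (0 ⊔ u)) - 4 * ((1+β) * (0 ⊔ (u - 1/2)))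
      = (1+β) * (2 * (0 ⊔ u) - 4 * (0 ⊔ (u - 1/2))) by ring,
    show (2:ℝ) * ((1+β) * (0 ⊔ (u-1))) - 4 * ((1+β) * (0 ⊔ (u - 3/2)))
      = (1+β) * (2 * (0 ⊔ (u-1)) - 4 * (0 ⊔ (u - 3/2))) by ring,
    M, M, ← mul_add, exampleNet_key u]
end
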